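/- arXiv:1801.08335 — 6 statements merged into one kernel-verified Lean document; each statement's English description precedes it below -/
import Mathlib

section
/- Let $X \subseteq \mathbb{R}^d$ be a closed set and $U \subseteq \mathbb{R}^d$ open with $U \cap X \neq \emptyset$. Define $U_0 := \{x \in U : [x,a] \subseteq U \text{ for all } a \in A_x\}$, where $A_x := \{a \in X : |a - x| = \operatorname{dist}(x, X)\}$ and $[x,a]$ denotes the closed segment. Then $U_0$ is open, $U_0 \cap X = U \cap X$, and for all $x \in U_0$ and all $a \in A_x$ we have $[x,a] \subseteq U_0$. -/
open Metric Filter Topology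

private lemma le_infDist' {α : Type*} [PseudoMetricSpace α] {s : Set α} {x : α} {c : ℝ}
    (hs : s.Nonempty) (h : ∀ y ∈ s, c ≤ dist x y) : c ≤ Metric.infDist x s := by
  rw [Metric.infDist_eq_iInf]
  haveI := hs.to_subtype
  exact le_ciInf fun y => h y y.2

/-- If `a` is a nearest point of `x` in `X` and `z` lies on the segment `[x,a]` with `z ≠ x`,
then the nearest point of `z` in `X` is unique and equals `a`. -/
private lemma nearest_unique {d : ℕ} {X : Set (EuclideanSpace ℝ (Fin d))}
    (hXne : X.Nonempty) {x a z b : EuclideanSpace ℝ (Fin d)}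
    (haX : a ∈ X) (ha : dist x a = Metric.infDist x X)
    (hz : z ∈ segment ℝ x a) (hbX : b ∈ X) (hb : dist z b = Metric.infDist z X)
    (hzx : z ≠ x) : b = a := by
  have hw : Wbtw ℝ x z a := mem_segment_iff_wbtw.1 hz
  have d1 : dist x z + dist z a = dist x a := hw.dist_add_dist
  -- infDist z X = dist z a
  have h2 : Metric.infDist z X = dist z a := by
    refine le_antisymm (Metric.infDist_le_dist_of_mem haX) (le_infDist' hXne ?_)
    intro y hy
    have h3 : dist x a ≤ dist x y := ha ▸ Metric.infDist_le_dist_of_mem hy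
    have h4 : dist x y ≤ dist x z + dist z y := dist_triangle _ _ _
    linarith
  have hzb : dist z b = dist z a := by rw [hb, h2]
  -- equality in the triangle inequality for x, z, b
  have h5 : dist x z + dist z b = dist x b := by
    have h6 : dist x b ≤ dist x z + dist z b := dist_triangle _ _ _
    have h7 : dist x a ≤ dist x b := ha ▸ Metric.infDist_le_dist_of_mem hbX
    linarith [hzb, d1]
  have hwb : Wbtw ℝ x z b := dist_add_dist_eq_iff.1 h5
  -- same ray arguments
  have hr1 : SameRay ℝ (z - x) (a - z) := by
    have := wbtw_iff_sameRay_vsub.1 hw; simpa using this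
  have hr2 : SameRay ℝ (z - x) (b - z) := by
    have := wbtw_iff_sameRay_vsub.1 hwb; simpa using this
  have hzx' : z - x ≠ 0 := sub_ne_zero.2 hzx
  have hr : SameRay ℝ (b - z) (a - z) :=
    hr2.symm.trans hr1 (fun h => absurd h hzx')
  have hnorm : ‖b - z‖ = ‖a - z‖ := by
    rw [← dist_eq_norm, ← dist_eq_norm, dist_comm b z, dist_comm a z, hzb]
  have hkey : ‖b - z‖ • (a - z) = ‖a - z‖ • (b - z) := hr.norm_smul_eq
  rcases eq_or_ne ‖b - z‖ 0 with h0 | h0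
  · have hb0 : b - z = 0 := norm_eq_zero.1 h0
    have ha0 : a - z = 0 := norm_eq_zero.1 (hnorm ▸ h0)
    have := hb0.trans ha0.symm
    exact sub_left_injective this
  · rw [hnorm] at hkey
    have := smul_right_injective (EuclideanSpace ℝ (Fin d)) (hnorm ▸ h0) hkey.symm
    exact sub_left_injective this

theorem stmt1 {d : ℕ} (X : Set (EuclideanSpace ℝ (Fin d))) (hX : IsClosed X)
    (U : Set (EuclideanSpace ℝ (Fin d))) (hU : IsOpen U) (hUX : (U ∩ X).Nonempty)
    (A : EuclideanSpace ℝ (Fin d) → Set (EuclideanSpace ℝ (Fin d)))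
    (hA : ∀ x, A x = {a ∈ X | dist x a = Metric.infDist x X})
    (U0 : Set (EuclideanSpace ℝ (Fin d)))
    (hU0 : U0 = {x ∈ U | ∀ a ∈ A x, segment ℝ x a ⊆ U}) :
    IsOpen U0 ∧ U0 ∩ X = U ∩ X ∧ ∀ x ∈ U0, ∀ a ∈ A x, segment ℝ x a ⊆ U0 := by
  have hXne : X.Nonempty := ⟨hUX.choose, hUX.choose_spec.2⟩
  -- Part 2: U0 ∩ X = U ∩ X
  have part2 : U0 ∩ X = U ∩ X := by
    apply Set.Subset.antisymm
    · rintro y ⟨hy1, hy2⟩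
      rw [hU0] at hy1
      exact ⟨hy1.1, hy2⟩
    · rintro y ⟨hyU, hyX⟩
      refine ⟨?_, hyX⟩
      rw [hU0]
      refine ⟨hyU, ?_⟩
      intro a haA
      rw [hA] at haA
      have : dist y a = 0 := by
        rw [haA.2, Metric.infDist_zero_of_mem hyX]
      have hay : a = y := by rwa [dist_comm, dist_eq_zero] at this
      subst hay
      rw [segment_same]
      simpa using hyU
  -- Part 3
  have part3 : ∀ x ∈ U0, ∀ a ∈ A x, segment ℝ x a ⊆ U0 := by
    intro x hx a haA z hz
    rw [hU0] at hx ⊢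
    have hsegU : segment ℝ x a ⊆ U := hx.2 a haA
    rw [hA] at haA
    refine ⟨hsegU hz, ?_⟩
    intro b hbA
    rw [hA] at hbA
    rcases eq_or_ne z x with rfl | hzx
    · exact hx.2 b (by rw [hA]; exact hbA)
    · have hba : b = a := nearest_unique hXne haA.1 haA.2 hz hbA.1 hbA.2 hzx
      subst hba
      intro w hw
      apply hsegU
      have : segment ℝ z b ⊆ segment ℝ x b :=
        (convex_segment x b).segment_subset hz (right_mem_segment ℝ x b)
      exact this hw
  refine ⟨?_, part2, part3⟩
  -- Part 1: openness
  rw [Metric.isOpen_iff]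
  intro x hx
  by_contra hcon
  push_neg at hcon
  have hxU : x ∈ U := by rw [hU0] at hx; exact hx.1
  obtain ⟨δ₀, hδ₀pos, hball⟩ := Metric.isOpen_iff.1 hU x hxU
  -- choose a sequence y n → x with y n ∉ U0
  have hseq : ∀ n : ℕ, ∃ y, dist y x < min δ₀ (1 / (n + 1)) ∧ y ∉ U0 := by
    intro n
    have hpos : (0:ℝ) < min δ₀ (1 / (n + 1)) := by
      refine lt_min hδ₀pos (by positivity)
    obtain ⟨y, hy1, hy2⟩ := (Set.not_subset).1 (hcon _ hpos)
    exact ⟨y, Metric.mem_ball.1 hy1, hy2⟩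
  choose y hy1 hy2 using hseq
  have hyU : ∀ n, y n ∈ U := fun n =>
    hball (Metric.mem_ball.2 ((hy1 n).trans_le (min_le_left _ _)))
  -- extract bad nearest points and bad segment points
  have hbad : ∀ n, ∃ b ∈ X, dist (y n) b = Metric.infDist (y n) X ∧
      ∃ t ∈ Set.Icc (0:ℝ) 1, y n + t • (b - y n) ∉ U := by
    intro n
    have := hy2 n
    rw [hU0] at this
    simp only [Set.mem_setOf_eq, not_and, not_forall] at this
    obtain ⟨b, hbA, hseg⟩ := this (hyU n)
    rw [hA] at hbA
    rw [Set.not_subset] at hseg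
    obtain ⟨p, hp1, hp2⟩ := hseg
    rw [segment_eq_image'] at hp1
    obtain ⟨t, ht, hpt⟩ := hp1
    have hpt' : y n + t • (b - y n) = p := hpt
    exact ⟨b, hbA.1, hbA.2, t, ht, by rwa [hpt']⟩
  choose b hbX hbdist t ht hpU using hbad
  -- y n → x
  have hytendsto : Tendsto y atTop (𝓝 x) := by
    rw [tendsto_iff_dist_tendsto_zero]
    refine squeeze_zero (fun n => dist_nonneg) (fun n => ?_)
      tendsto_one_div_add_atTop_nhds_zero_nat
    exact ((hy1 n).trans_le (min_le_right _ _)).le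
  -- b n is bounded
  set R : ℝ := δ₀ + (Metric.infDist x X + δ₀) with hR
  have hbball : ∀ n, b n ∈ Metric.closedBall x R := by
    intro n
    have h1 : dist (y n) x < δ₀ := (hy1 n).trans_le (min_le_left _ _)
    have h2 : dist (y n) (b n) ≤ Metric.infDist x X + δ₀ := by
      rw [hbdist n]
      calc Metric.infDist (y n) X ≤ Metric.infDist x X + dist (y n) x :=
            Metric.infDist_le_infDist_add_dist
        _ ≤ Metric.infDist x X + δ₀ := by linarith
    rw [Metric.mem_closedBall]
    calc dist (b n) x ≤ dist (b n) (y n) + dist (y n) x := dist_triangle _ _ _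
      _ ≤ (Metric.infDist x X + δ₀) + δ₀ := by
          rw [dist_comm (b n) (y n)]; linarith
      _ = R := by ring
  obtain ⟨binf, _, φ, hφ, hbtend⟩ :=
    (isCompact_closedBall x R).tendsto_subseq hbball
  obtain ⟨tinf, htinf, ψ, hψ, httend⟩ :=
    (isCompact_Icc (a := (0:ℝ)) (b := 1)).tendsto_subseq (fun n => ht (φ n))
  set σ : ℕ → ℕ := φ ∘ ψ with hσ
  have hσmono : StrictMono σ := hφ.comp hψ
  have hyσ : Tendsto (y ∘ σ) atTop (𝓝 x) :=
    hytendsto.comp hσmono.tendsto_atTop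
  have hbσ : Tendsto (b ∘ σ) atTop (𝓝 binf) :=
    hbtend.comp hψ.tendsto_atTop
  have htσ : Tendsto (t ∘ σ) atTop (𝓝 tinf) := httend
  -- binf ∈ X
  have hbinfX : binf ∈ X := hX.mem_of_tendsto hbσ (Eventually.of_forall fun n => hbX _)
  -- dist x binf = infDist x X
  have hbinfdist : dist x binf = Metric.infDist x X := by
    have h1 : Tendsto (fun n => dist (y (σ n)) (b (σ n))) atTop (𝓝 (dist x binf)) :=
      hyσ.dist hbσ
    have h2 : Tendsto (fun n => dist (y (σ n)) (b (σ n))) atTop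
        (𝓝 (Metric.infDist x X)) := by
      have : Tendsto (fun n => Metric.infDist (y (σ n)) X) atTop
          (𝓝 (Metric.infDist x X)) :=
        ((Metric.continuous_infDist_pt X).tendsto x).comp hyσ
      exact this.congr fun n => (hbdist (σ n)).symm
    exact tendsto_nhds_unique h1 h2
  -- limit point p∞
  have hpinfmem : x + tinf • (binf - x) ∈ segment ℝ x binf := by
    rw [segment_eq_image']
    exact ⟨tinf, htinf, rfl⟩
  have hpinfU : x + tinf • (binf - x) ∈ U := by
    rw [hU0] at hx
    exact hx.2 binf (by rw [hA]; exact ⟨hbinfX, hbinfdist⟩) hpinfmem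
  have hptend : Tendsto (fun n => y (σ n) + (t (σ n)) • (b (σ n) - y (σ n)))
      atTop (𝓝 (x + tinf • (binf - x))) :=
    hyσ.add (htσ.smul (hbσ.sub hyσ))
  have := hptend.eventually (hU.mem_nhds hpinfU)
  obtain ⟨n, hn⟩ := this.exists
  exact hpU (σ n) hn
end

section
/- Let $-1 \le t_0 < t_1 < \cdots < t_k \le 1$ be equidistant points with $t_k - t_0 = a > 0$. If $x_0, x_1, \ldots, x_k \in \mathbb{R}$ solve the linear system $\sum_{j=0}^k \binom{k}{j} t_i^j x_j = y_i$ for $i = 0, 1, \ldots, k$, then $\max_j |x_j| \le (16 e^2 / a)^k \max_i |y_i|$. -/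
open Polynomial Finset Lagrange Matrix Nat

/-! The polynomial `q(s) = ∑ⱼ C(k,j) xⱼ sʲ` takes the value `yᵢ` at `tᵢ`, so it is the Lagrange
interpolant `∑ᵢ yᵢ wᵢ ∏_{m ≠ i} (s - tₘ)` with barycentric weights `wᵢ = ∏_{m ≠ i} (tᵢ - tₘ)⁻¹`.
As the nodes lie in `[-1, 1]`, the `j`-th coefficient of `∏_{m ≠ i} (s - tₘ)` is at most `C(k,j)`
in absolute value, and for nodes of step `h = a / k` one has `|wᵢ|⁻¹ = i! (k-i)! hᵏ ≥ k! hᵏ / 2ᵏ`.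
Hence `|xⱼ| ≤ (k+1) 2ᵏ kᵏ / (k! aᵏ) max |yᵢ|`, and `k + 1 ≤ 2ᵏ`, `kᵏ / k! ≤ eᵏ` bound the
constant by `(4e / a)ᵏ`. -/

namespace Lagrange

variable {ι : Type*} [DecidableEq ι]

theorem abs_coeff_nodal_le {s : Finset ι} {v : ι → ℝ} (hv : ∀ i ∈ s, |v i| ≤ 1) (j : ℕ) :
    |(nodal s v).coeff j| ≤ (#s).choose j := by
  induction s using Finset.induction_on generalizing j with
  | empty => rcases j with _ | j <;> simp [coeff_one]
  | @insert i s hi ih =>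
    have ih := ih fun m hm => hv m (mem_insert_of_mem hm)
    have hvi : |v i| ≤ 1 := hv i (mem_insert_self i s)
    rw [nodal_insert_eq_nodal hi, mul_comm, card_insert_of_notMem hi]
    rcases j with _ | j
    · simpa [mul_coeff_zero, abs_mul] using
        (mul_le_of_le_one_right (abs_nonneg _) hvi).trans (ih 0)
    · rw [coeff_mul_X_sub_C, Nat.choose_succ_succ', Nat.cast_add]
      calc _ ≤ |(nodal s v).coeff j| + |(nodal s v).coeff (j + 1)| * |v i| := by
            rw [← abs_mul]; exact abs_sub _ _
        _ ≤ _ := add_le_add (ih j) ((mul_le_of_le_one_right (abs_nonneg _) hvi).trans (ih _))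

theorem basis_eq_C_nodalWeight_mul_nodal_erase {F : Type*} [Field F] {s : Finset ι} {v : ι → F}
    {i : ι} (hi : i ∈ s) :
    Lagrange.basis s v i = C (nodalWeight s v i) * nodal (s.erase i) v := by
  rw [basis_eq_prod_sub_inv_mul_nodal_div hi, nodal_erase_eq_nodal_div hi]

theorem abs_coeff_interpolate_le {s : Finset ι} {v : ι → ℝ} (hv : ∀ i ∈ s, |v i| ≤ 1)
    (r : ι → ℝ) (j : ℕ) :
    |(interpolate s v r).coeff j| ≤
      (#s - 1).choose j * ∑ i ∈ s, |r i| * |nodalWeight s v i| := by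
  rw [interpolate_apply, finsetSum_coeff, mul_sum]
  refine (abs_sum_le_sum_abs _ _).trans (sum_le_sum fun i hi => ?_)
  have hnodal := abs_coeff_nodal_le (s := s.erase i) (fun m hm => hv m (mem_of_mem_erase hm)) j
  rw [card_erase_of_mem hi] at hnodal
  rw [coeff_C_mul, basis_eq_C_nodalWeight_mul_nodal_erase hi, coeff_C_mul, abs_mul, abs_mul]
  calc _ ≤ |r i| * (|nodalWeight s v i| * (#s - 1).choose j) := by gcongr
    _ = _ := by ring

theorem abs_le_of_vandermonde_mulVec_eq {n : ℕ} {v c r : Fin n → ℝ}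
    (hinj : Function.Injective v) (hv : ∀ i, |v i| ≤ 1) (hsys : vandermonde v *ᵥ c = r)
    (j : Fin n) :
    |c j| ≤ (n - 1).choose j * ∑ i, |r i| * |nodalWeight univ v i| := by
  have hinterp : ofFn n c = interpolate univ v r := by
    refine eq_interpolate_of_eval_eq r hinj.injOn (by simpa using ofFn_degree_lt c) fun i _ => ?_
    rw [ofFn_eq_sum_monomial, eval_finsetSum, ← hsys]
    exact sum_congr rfl fun j _ => by simp [eval_monomial, mul_comm]
  have h := abs_coeff_interpolate_le (s := univ) (fun i _ => hv i) r j
  rwa [← hinterp, ofFn_coeff_eq_val_of_lt c j.isLt, Finset.card_univ, Fintype.card_fin] at h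

end Lagrange

theorem prod_erase_range_abs_sub {i k : ℕ} (hik : i ≤ k) :
    ∏ m ∈ (range (k + 1)).erase i, |(i : ℝ) - m| = i ! * (k - i)! := by
  induction k, hik using Nat.le_induction with
  | base =>
    rw [range_add_one, erase_insert notMem_range_self, ← prod_range_reflect, Nat.sub_self,
      factorial_zero, Nat.cast_one, mul_one, ← prod_range_add_one_eq_factorial, Nat.cast_prod]
    refine prod_congr rfl fun m hm => ?_
    have hm := mem_range.mp hm
    rw [Nat.cast_sub (by omega), Nat.cast_sub (by omega), abs_of_nonneg (by push_cast; linarith)]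
    push_cast; ring
  | succ k hik ih =>
    have hik' : (i : ℝ) ≤ k := by exact_mod_cast hik
    rw [range_add_one, erase_insert_of_ne (by omega), prod_insert (by simp), ih,
      Nat.succ_sub hik, factorial_succ, abs_sub_comm, abs_of_nonneg (by push_cast; linarith)]
    push_cast [Nat.cast_sub hik]; ring

theorem prod_erase_univ_abs_sub {k : ℕ} (i : Fin (k + 1)) :
    ∏ m ∈ univ.erase i, |((i : ℕ) : ℝ) - (m : ℕ)| = (i : ℕ)! * (k - i)! := by
  rw [← prod_erase_range_abs_sub (Nat.lt_succ_iff.mp i.isLt), ← Nat.Iio_eq_range,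
    ← Fin.map_valEmbedding_univ, ← Fin.valEmbedding_apply, ← map_erase, prod_map]

theorem inv_factorial_mul_factorial_le {i k : ℕ} (hik : i ≤ k) :
    ((i ! * (k - i)! : ℝ))⁻¹ ≤ 2 ^ k / k ! := by
  have hchoose : (k.choose i : ℝ) = k ! / (i ! * (k - i)!) := Nat.cast_choose ℝ hik
  rw [show ((i ! * (k - i)! : ℝ))⁻¹ = (k.choose i : ℝ) / (k ! : ℝ) by rw [hchoose]; field_simp]
  gcongr
  exact_mod_cast choose_le_two_pow k i

theorem abs_nodalWeight_equidistant {k : ℕ} (t0 h : ℝ) (i : Fin (k + 1)) :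
    |nodalWeight univ (fun m : Fin (k + 1) => t0 + (m : ℕ) * h) i| =
      ((i : ℕ)! * (k - i)! * |h| ^ k)⁻¹ := by
  have hconst : |h| ^ k = ∏ _m ∈ univ.erase i, |h| := by simp
  rw [nodalWeight, abs_prod, ← prod_erase_univ_abs_sub i, hconst, ← prod_mul_distrib,
    ← prod_inv_distrib]
  refine prod_congr rfl fun m _ => ?_
  rw [abs_inv, ← abs_mul]
  ring_nf

theorem abs_nodalWeight_equidistant_le {k : ℕ} (t0 : ℝ) {h : ℝ} (hh : 0 < h)
    (i : Fin (k + 1)) :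
    |nodalWeight univ (fun m : Fin (k + 1) => t0 + (m : ℕ) * h) i| ≤ 2 ^ k / k ! / h ^ k := by
  rw [abs_nodalWeight_equidistant, abs_of_pos hh, mul_inv, div_eq_mul_inv _ (h ^ k)]
  gcongr
  exact inv_factorial_mul_factorial_le (Nat.lt_succ_iff.mp i.isLt)

theorem succ_mul_two_pow_div_factorial_le {k : ℕ} {a : ℝ} (ha : 0 < a) :
    (k + 1) * (2 ^ k / k ! / (a / k) ^ k) ≤ (4 * Real.exp 1 / a) ^ k := by
  calc (k + 1) * (2 ^ k / k ! / (a / k) ^ k) ≤ 2 ^ k * (2 ^ k / k ! / (a / k) ^ k) := by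
        gcongr; exact_mod_cast Nat.lt_two_pow_self
    _ = (2 * 2) ^ k / a ^ k * (k ^ k / k !) := by
        rw [div_pow, mul_pow]; field_simp
    _ ≤ (2 * 2) ^ k / a ^ k * Real.exp k := by
        gcongr; exact Real.pow_div_factorial_le_exp _ k.cast_nonneg k
    _ = (4 * Real.exp 1 / a) ^ k := by
        norm_num [div_pow, mul_pow]; ring

theorem abs_add_mul_le_one {t0 h : ℝ} {i k : ℕ} (hh : 0 ≤ h) (hik : i ≤ k) (h0 : -1 ≤ t0)
    (h1 : t0 + k * h ≤ 1) : |t0 + i * h| ≤ 1 := by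
  have : (i : ℝ) * h ≤ k * h := by gcongr
  rw [abs_le]; constructor <;> nlinarith [mul_nonneg i.cast_nonneg hh]

theorem sum_abs_mul_abs_nodalWeight_equidistant_le {k : ℕ} (t0 : ℝ) {h : ℝ} (hh : 0 < h)
    (r : Fin (k + 1) → ℝ) :
    ∑ i, |r i| * |nodalWeight univ (fun m : Fin (k + 1) => t0 + (m : ℕ) * h) i|
      ≤ (k + 1) * (2 ^ k / k ! / h ^ k) * univ.sup' univ_nonempty fun i => |r i| := by
  set M := univ.sup' univ_nonempty fun i => |r i|
  have hM : 0 ≤ M := (abs_nonneg _).trans (le_sup' (fun i => |r i|) (mem_univ 0))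
  calc _ ≤ ∑ _i : Fin (k + 1), M * (2 ^ k / k ! / h ^ k) :=
        sum_le_sum fun i hi => mul_le_mul (le_sup' (fun i => |r i|) hi)
          (abs_nodalWeight_equidistant_le t0 hh i) (abs_nonneg _) hM
    _ = _ := by simp; ring

theorem stmt5 (k : ℕ) (hk : 1 ≤ k) (a t0 : ℝ) (ha : 0 < a)
    (h0 : -1 ≤ t0) (h1 : t0 + a ≤ 1)
    (t : Fin (k+1) → ℝ) (ht : ∀ i, t i = t0 + (i : ℕ) * (a / k))
    (x y : Fin (k+1) → ℝ)
    (hsys : ∀ i, ∑ j : Fin (k+1), (k.choose (j : ℕ) : ℝ) * t i ^ (j : ℕ) * x j = y i) :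
    ∀ j, |x j| ≤ (16 * Real.exp 2 / a) ^ k *
      Finset.univ.sup' Finset.univ_nonempty (fun i => |y i|) := by
  intro j
  have hk0 : (0 : ℝ) < k := by exact_mod_cast hk
  have hh : 0 < a / k := div_pos ha hk0
  have hinj : Function.Injective t := fun i m him => by
    rw [ht, ht] at him
    exact Fin.ext (by exact_mod_cast mul_right_cancel₀ hh.ne' (add_left_cancel him))
  have hnodes (i : Fin (k + 1)) : |t i| ≤ 1 := by
    rw [ht]
    exact abs_add_mul_le_one hh.le (Nat.lt_succ_iff.mp i.isLt) h0
      (by rwa [mul_div_cancel₀ a hk0.ne'])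
  have hvandermonde : vandermonde t *ᵥ (fun j => k.choose j * x j) = y := funext fun i => by
    rw [← hsys i, mulVec, dotProduct]
    exact sum_congr rfl fun j _ => by rw [vandermonde_apply]; ring
  have hcoeff := abs_le_of_vandermonde_mulVec_eq hinj hnodes hvandermonde j
  have hchoose : (0 : ℝ) < k.choose j := by
    exact_mod_cast Nat.choose_pos (Nat.lt_succ_iff.mp j.isLt)
  rw [abs_mul, Nat.abs_cast, Nat.add_sub_cancel, show t = _ from funext ht] at hcoeff
  calc |x j| ≤ (k + 1) * (2 ^ k / k ! / (a / k) ^ k) * univ.sup' univ_nonempty fun i => |y i| :=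
        le_of_mul_le_mul_left (hcoeff.trans (mul_le_mul_of_nonneg_left
          (sum_abs_mul_abs_nodalWeight_equidistant_le t0 hh y) hchoose.le)) hchoose
    _ ≤ (4 * Real.exp 1 / a) ^ k * univ.sup' univ_nonempty fun i => |y i| := by
        gcongr
        · exact (abs_nonneg _).trans (le_sup' (fun i => |y i|) (mem_univ j))
        · exact succ_mul_two_pow_div_factorial_le ha
    _ ≤ (16 * Real.exp 2 / a) ^ k * univ.sup' univ_nonempty fun i => |y i| := by
        gcongr <;> norm_num
end

section
/- Let $X \subseteq \mathbb{R}^d$ be a set such that $\mathcal{A}^\infty(X) = C^\infty(X)$ ($X$ is $\mathcal{A}^\infty$-admissible). Let $U$ be an open neighborhood of $X$ in $\mathbb{R}^d$ and let $\varphi : U \to \mathbb{R}^e$ be a smooth embedding (a diffeomorphism onto an embedded submanifold $\varphi(U)$ of $\mathbb{R}^e$). Then $\varphi(X) \subseteq \mathbb{R}^e$ is $\mathcal{A}^\infty$-admissible. -/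
/-- `f` is arc-smooth on `X`: it maps smooth curves in `X` to smooth functions. -/
def ArcSmooth {n : ℕ} (X : Set (EuclideanSpace ℝ (Fin n)))
    (f : EuclideanSpace ℝ (Fin n) → ℝ) : Prop :=
  ∀ c : ℝ → EuclideanSpace ℝ (Fin n), ContDiff ℝ (⊤ : ℕ∞) c → (∀ t, c t ∈ X) →
    ContDiff ℝ (⊤ : ℕ∞) (f ∘ c)

/-- `f ∈ C^∞(X)`: around each point of `X`, `f` extends to a smooth function
on an open neighborhood. -/
def LocSmooth {n : ℕ} (X : Set (EuclideanSpace ℝ (Fin n)))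
    (f : EuclideanSpace ℝ (Fin n) → ℝ) : Prop :=
  ∀ x ∈ X, ∃ U : Set (EuclideanSpace ℝ (Fin n)), IsOpen U ∧ x ∈ U ∧
    ∃ F : EuclideanSpace ℝ (Fin n) → ℝ, ContDiff ℝ (⊤ : ℕ∞) F ∧ ∀ y ∈ U ∩ X, F y = f y

lemma locSmooth_arcSmooth {n : ℕ} (X : Set (EuclideanSpace ℝ (Fin n)))
    (f : EuclideanSpace ℝ (Fin n) → ℝ) (hf : LocSmooth X f) : ArcSmooth X f := by
  intro c hc hcX
  rw [contDiff_iff_contDiffAt]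
  intro t
  obtain ⟨V, hVopen, hmem, F, hF, hFf⟩ := hf (c t) (hcX t)
  have hev : ∀ᶠ s in nhds t, (f ∘ c) s = (F ∘ c) s := by
    have hcont : ContinuousAt c t := hc.continuous.continuousAt
    filter_upwards [hcont (hVopen.mem_nhds hmem)] with s hs
    exact (hFf (c s) ⟨hs, hcX s⟩).symm
  exact ((hF.contDiffAt).comp t hc.contDiffAt).congr_of_eventuallyEq hev

/-- If `X` is `𝒜^∞`-admissible and `φ` is a smooth embedding of an open
neighborhood `U` of `X` (smooth, injective, with smooth local left inverses,
i.e. a diffeomorphism onto an embedded submanifold), then `φ(X)` is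
`𝒜^∞`-admissible. -/
theorem stmt11 {d e : ℕ} (X : Set (EuclideanSpace ℝ (Fin d)))
    (U : Set (EuclideanSpace ℝ (Fin d))) (hU : IsOpen U) (hXU : X ⊆ U)
    (φ : EuclideanSpace ℝ (Fin d) → EuclideanSpace ℝ (Fin e))
    (hφ : ContDiffOn ℝ (⊤ : ℕ∞) φ U) (hinj : Set.InjOn φ U)
    (hretr : ∀ x ∈ U, ∃ V : Set (EuclideanSpace ℝ (Fin e)), IsOpen V ∧ φ x ∈ V ∧
      ∃ ψ : EuclideanSpace ℝ (Fin e) → EuclideanSpace ℝ (Fin d),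
        ContDiff ℝ (⊤ : ℕ∞) ψ ∧ ∀ z ∈ U, φ z ∈ V → ψ (φ z) = z)
    (hX : ∀ g : EuclideanSpace ℝ (Fin d) → ℝ, ArcSmooth X g ↔ LocSmooth X g) :
    ∀ f : EuclideanSpace ℝ (Fin e) → ℝ, ArcSmooth (φ '' X) f ↔ LocSmooth (φ '' X) f := by
  intro f
  constructor
  · intro hf
    have hg : ArcSmooth X (f ∘ φ) := by
      intro c hc hcX
      have hφc : ContDiff ℝ (⊤ : ℕ∞) (φ ∘ c) := by
        rw [contDiff_iff_contDiffAt]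
        intro t
        exact (hφ.contDiffAt (hU.mem_nhds (hXU (hcX t)))).comp t hc.contDiffAt
      exact hf (φ ∘ c) hφc (fun t => ⟨c t, hcX t, rfl⟩)
    have hloc := (hX (f ∘ φ)).mp hg
    rintro y ⟨x, hxX, rfl⟩
    obtain ⟨W, hWopen, hxW, F, hF, hFeq⟩ := hloc x hxX
    obtain ⟨V, hVopen, hφxV, ψ, hψ, hψφ⟩ := hretr x (hXU hxX)
    refine ⟨V ∩ ψ ⁻¹' W, hVopen.inter (hWopen.preimage hψ.continuous),
      ⟨hφxV, ?_⟩, F ∘ ψ, hF.comp hψ, ?_⟩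
    · show ψ (φ x) ∈ W
      rw [hψφ x (hXU hxX) hφxV]; exact hxW
    · rintro y ⟨⟨hyV, hyW⟩, z, hzX, rfl⟩
      have hz : ψ (φ z) = z := hψφ z (hXU hzX) hyV
      show F (ψ (φ z)) = f (φ z)
      rw [Set.mem_preimage, hz] at hyW
      rw [hz]
      exact hFeq z ⟨hyW, hzX⟩
  · exact locSmooth_arcSmooth _ f
end

section
/- Let $f : \mathbb{R}^d \to \mathbb{R}$ be smooth, $K \subseteq \mathbb{R}^d$ compact, and $(M_k)$ a positive sequence. Then the following are equivalent: (1) there exist $C, \rho > 0$ such that $|d_v^k f(x)| \le C \rho^k k! M_k$ for all $k \in \mathbb{N}$, $x \in K$, and unit vectors $v$; (3) there exist $C', \rho' > 0$ such that $|\partial^\alpha f(x)| \le C' \rho'^{|\alpha|} |\alpha|! M_{|\alpha|}$ for all $x \in K$ and multi-indices $\alpha \in \mathbb{N}^d$. -/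
open scoped ContDiff
open Finset
variable {E : Type*} [NormedAddCommGroup E] [NormedSpace ℝ E]

noncomputable def Dop (v : E) (g : E → ℝ) : E → ℝ := fun y => fderiv ℝ g y v

noncomputable def Dlist (L : List E) (g : E → ℝ) : E → ℝ := L.foldr Dop g

theorem Dlist_nil (g : E → ℝ) : Dlist [] g = g := rfl
theorem Dlist_cons (v : E) (L : List E) (g : E → ℝ) :
    Dlist (v :: L) g = Dop v (Dlist L g) := rfl
theorem Dlist_concat (v : E) (L : List E) (g : E → ℝ) :
    Dlist (L ++ [v]) g = Dlist L (Dop v g) := by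
  simp [Dlist, List.foldr_append]

theorem contDiff_Dop (v : E) {g : E → ℝ} (hg : ContDiff ℝ (⊤:ℕ∞) g) :
    ContDiff ℝ (⊤:ℕ∞) (Dop v g) :=
  (ContinuousLinearMap.apply ℝ ℝ v).contDiff.comp (hg.fderiv_right (by simp))

theorem contDiff_Dlist (L : List E) {g : E → ℝ} (hg : ContDiff ℝ (⊤:ℕ∞) g) :
    ContDiff ℝ (⊤:ℕ∞) (Dlist L g) := by
  induction L with
  | nil => exact hg
  | cons v L ih => exact contDiff_Dop v ih

-- connection with iteratedFDeriv
theorem iteratedFDeriv_eq_Dlist (k : ℕ) {f : E → ℝ} (hf : ContDiff ℝ (⊤:ℕ∞) f)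
    (x : E) (v : Fin k → E) :
    iteratedFDeriv ℝ k f x v = Dlist (List.ofFn v) f x := by
  induction k generalizing f with
  | zero => simp [Dlist]
  | succ k ih =>
    rw [iteratedFDeriv_succ_apply_right]
    have h1 : ContDiff ℝ (⊤:ℕ∞) (fderiv ℝ f) := hf.fderiv_right (by simp)
    have step : iteratedFDeriv ℝ k (fderiv ℝ f) x (Fin.init v) (v (Fin.last k)) =
        iteratedFDeriv ℝ k (Dop (v (Fin.last k)) f) x (Fin.init v) := by
      have := (ContinuousLinearMap.apply ℝ ℝ (v (Fin.last k))).iteratedFDeriv_comp_left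
        (f := fderiv ℝ f) (h1.contDiffAt (x := x)) (i := k) (by exact_mod_cast le_top)
      have h2 : (ContinuousLinearMap.apply ℝ ℝ (v (Fin.last k))) ∘ (fderiv ℝ f)
          = Dop (v (Fin.last k)) f := rfl
      rw [h2] at this
      rw [this]
      rfl
    rw [step, ih (contDiff_Dop _ hf) (Fin.init v)]
    have : List.ofFn v = List.ofFn (Fin.init v) ++ [v (Fin.last k)] := by
      rw [List.ofFn_succ', List.concat_eq_append]
      rfl
    rw [this, Dlist_concat]
theorem hasFDerivAt_Dop (v : E) {g : E → ℝ} (hg : ContDiff ℝ (⊤:ℕ∞) g) (y : E) :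
    HasFDerivAt (Dop v g)
      ((ContinuousLinearMap.apply ℝ ℝ v).comp (fderiv ℝ (fderiv ℝ g) y)) y := by
  have h1 : ContDiff ℝ (⊤:ℕ∞) (fderiv ℝ g) := hg.fderiv_right (by simp)
  exact (ContinuousLinearMap.apply ℝ ℝ v).hasFDerivAt.comp y
    ((h1.differentiable (by simp) y).hasFDerivAt)

theorem Dop_comm {g : E → ℝ} (hg : ContDiff ℝ (⊤:ℕ∞) g) (u v : E) :
    Dop u (Dop v g) = Dop v (Dop u g) := by
  funext y
  have h1 : ContDiff ℝ (⊤:ℕ∞) (fderiv ℝ g) := hg.fderiv_right (by simp)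
  have hsym : ∀ a b : E, fderiv ℝ (fderiv ℝ g) y a b = fderiv ℝ (fderiv ℝ g) y b a := by
    intro a b
    exact second_derivative_symmetric
      (fun z => (hg.differentiable (by simp) z).hasFDerivAt)
      ((h1.differentiable (by simp) y).hasFDerivAt) a b
  show fderiv ℝ (Dop v g) y u = fderiv ℝ (Dop u g) y v
  rw [(hasFDerivAt_Dop v hg y).fderiv, (hasFDerivAt_Dop u hg y).fderiv]
  exact hsym u v

theorem Dlist_perm {L L' : List E} (h : L.Perm L') {g : E → ℝ}
    (hg : ContDiff ℝ (⊤:ℕ∞) g) : Dlist L g = Dlist L' g := by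
  induction h with
  | nil => rfl
  | cons x h ih => rw [Dlist_cons, Dlist_cons, ih]
  | swap x y l =>
    rw [Dlist_cons, Dlist_cons, Dlist_cons, Dlist_cons,
      Dop_comm (contDiff_Dlist l hg) y x]
  | trans h1 h2 ih1 ih2 => rw [ih1, ih2]

theorem iteratedFDeriv_perm_invariant (k : ℕ) {f : E → ℝ} (hf : ContDiff ℝ (⊤:ℕ∞) f)
    (x : E) (v : Fin k → E) (σ : Equiv.Perm (Fin k)) :
    iteratedFDeriv ℝ k f x (v ∘ σ) = iteratedFDeriv ℝ k f x v := by
  rw [iteratedFDeriv_eq_Dlist k hf x, iteratedFDeriv_eq_Dlist k hf x]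
  refine congrFun (Dlist_perm ?_ hf) x
  rw [List.ofFn_eq_map, List.ofFn_eq_map, ← List.map_map]
  refine List.Perm.map v ?_
  refine List.perm_of_nodup_nodup_toFinset_eq
    ((List.nodup_finRange k).map σ.injective) (List.nodup_finRange k) ?_
  ext j
  simp only [List.mem_toFinset, List.mem_map, List.mem_finRange, true_and]
  constructor
  · intro _; trivial
  · intro _; exact ⟨σ.symm j, by simp⟩

-- line derivatives
theorem deriv_line {g : E → ℝ} (hg : ContDiff ℝ (⊤:ℕ∞) g) (x v : E) (s : ℝ) :
    deriv (fun t : ℝ => g (x + t • v)) s = Dop v g (x + s • v) := by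
  have hA : HasDerivAt (fun t : ℝ => x + t • v) v s := by
    simpa using ((hasDerivAt_id s).smul_const v).const_add x
  have := ((hg.differentiable (by simp) (x + s • v)).hasFDerivAt.comp_hasDerivAt s hA)
  exact this.deriv

theorem iteratedDeriv_line {g : E → ℝ} (hg : ContDiff ℝ (⊤:ℕ∞) g) (k : ℕ) (x v : E) (s : ℝ) :
    iteratedDeriv k (fun t : ℝ => g (x + t • v)) s = Dlist (List.replicate k v) g (x + s • v) := by
  induction k generalizing g with
  | zero => simp [Dlist]
  | succ k ih =>
    rw [iteratedDeriv_succ']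
    have : deriv (fun t : ℝ => g (x + t • v)) = fun t : ℝ => Dop v g (x + t • v) :=
      funext fun t => deriv_line hg x v t
    rw [this, ih (contDiff_Dop v hg)]
    rw [List.replicate_succ']
    rw [Dlist_concat]

theorem iteratedDeriv_line_eq_iteratedFDeriv {f : E → ℝ} (hf : ContDiff ℝ (⊤:ℕ∞) f)
    (k : ℕ) (x v : E) :
    iteratedDeriv k (fun t : ℝ => f (x + t • v)) 0 = iteratedFDeriv ℝ k f x (fun _ => v) := by
  rw [iteratedDeriv_line hf k x v 0, iteratedFDeriv_eq_Dlist k hf x, List.ofFn_const]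
  norm_num

theorem incl_excl {k : ℕ} (T : Finset (Fin k)) :
    (∑ S : Finset (Fin k), (if T ⊆ S then ((-1:ℝ)^k * (-1)^S.card) else 0))
      = if T = univ then 1 else 0 := by
  rw [← Finset.sum_filter]
  have key : ∑ S ∈ univ.filter (fun S => T ⊆ S), ((-1:ℝ)^k * (-1)^S.card)
      = ∑ U ∈ Tᶜ.powerset, ((-1:ℝ)^k * (-1)^(U.card + T.card)) := by
    refine Finset.sum_nbij' (fun S => S \ T) (fun U => T ∪ U) ?_ ?_ ?_ ?_ ?_
    · intro S hS
      simp only [mem_filter, mem_univ, true_and] at hS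
      simp only [mem_powerset]
      intro a ha
      simp only [mem_sdiff] at ha
      simp [mem_compl, ha.2]
    · intro U hU
      simp only [mem_powerset] at hU
      simp only [mem_filter, mem_univ, true_and]
      exact subset_union_left
    · intro S hS
      simp only [mem_filter, mem_univ, true_and] at hS
      exact Finset.union_sdiff_of_subset hS
    · intro U hU
      simp only [mem_powerset] at hU
      refine Finset.union_sdiff_cancel_left ?_
      rw [Finset.disjoint_left]
      intro a haT haU
      have := hU haU
      simp only [mem_compl] at this
      exact this haT
    · intro S hS
      simp only [mem_filter, mem_univ, true_and] at hS
      congr 1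
      rw [← Finset.card_sdiff_add_card_eq_card hS]
  rw [key]
  have : ∑ U ∈ Tᶜ.powerset, ((-1:ℝ)^k * (-1)^(U.card + T.card))
      = ((-1:ℝ)^k * (-1)^T.card) * ∑ U ∈ Tᶜ.powerset, ((-1:ℝ)^U.card) := by
    rw [Finset.mul_sum]
    refine Finset.sum_congr rfl fun U _ => ?_
    ring
  rw [this]
  have hz : ∑ U ∈ Tᶜ.powerset, ((-1:ℝ)^U.card)
      = if Tᶜ = ∅ then 1 else 0 := by
    have := Finset.sum_powerset_neg_one_pow_card (x := Tᶜ)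
    calc ∑ U ∈ Tᶜ.powerset, ((-1:ℝ)^U.card)
        = ((∑ U ∈ Tᶜ.powerset, ((-1:ℤ)^U.card) : ℤ) : ℝ) := by push_cast; ring_nf
      _ = _ := by rw [this]; split <;> norm_num
  rw [hz]
  by_cases hT : T = univ
  · subst hT
    rw [if_pos rfl, if_pos (by simp), mul_one, card_univ, Fintype.card_fin, ← mul_pow]
    simp
  · rw [if_neg hT, if_neg]
    · ring
    · simpa [Finset.compl_eq_empty_iff] using hT

theorem polar {k : ℕ} (B : ContinuousMultilinearMap ℝ (fun _ : Fin k => E) ℝ)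
    (hB : ∀ (σ : Equiv.Perm (Fin k)) (w : Fin k → E), B (w ∘ σ) = B w) (v : Fin k → E) :
    (k.factorial : ℝ) * B v =
      ∑ S : Finset (Fin k), ((-1:ℝ)^k * (-1)^S.card) * B (fun _ => ∑ j ∈ S, v j) := by
  classical
  refine Eq.symm ?_
  have expand : ∀ S : Finset (Fin k), B (fun _ => ∑ j ∈ S, v j)
      = ∑ r ∈ Fintype.piFinset (fun _ : Fin k => S), B (fun i => v (r i)) := by
    intro S
    exact B.toMultilinearMap.map_sum_finset (fun _ j => v j) (fun _ => S)
  have pif : ∀ S : Finset (Fin k), Fintype.piFinset (fun _ : Fin k => S)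
      = univ.filter (fun r : Fin k → Fin k => univ.image r ⊆ S) := by
    intro S
    ext r
    simp [Fintype.mem_piFinset, Finset.image_subset_iff]
  calc ∑ S : Finset (Fin k), ((-1:ℝ)^k * (-1)^S.card) * B (fun _ => ∑ j ∈ S, v j)
      = ∑ S : Finset (Fin k), ∑ r : Fin k → Fin k,
          (if univ.image r ⊆ S then ((-1:ℝ)^k * (-1)^S.card) * B (fun i => v (r i)) else 0) := by
        refine Finset.sum_congr rfl fun S _ => ?_
        rw [expand S, pif S, Finset.sum_filter, Finset.mul_sum]
        refine Finset.sum_congr rfl fun r _ => ?_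
        split <;> simp
    _ = ∑ r : Fin k → Fin k, ∑ S : Finset (Fin k),
          (if univ.image r ⊆ S then ((-1:ℝ)^k * (-1)^S.card) else 0) * B (fun i => v (r i)) := by
        rw [Finset.sum_comm]
        refine Finset.sum_congr rfl fun r _ => Finset.sum_congr rfl fun S _ => ?_
        split <;> simp
    _ = ∑ r : Fin k → Fin k,
          (if univ.image r = univ then (1:ℝ) else 0) * B (fun i => v (r i)) := by
        refine Finset.sum_congr rfl fun r _ => ?_
        rw [← Finset.sum_mul, incl_excl]
    _ = ∑ r ∈ univ.filter (fun r : Fin k → Fin k => univ.image r = univ),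
          B (fun i => v (r i)) := by
        rw [Finset.sum_filter]
        refine Finset.sum_congr rfl fun r _ => ?_
        split <;> simp
    _ = ∑ σ : Equiv.Perm (Fin k), B (fun i => v (σ i)) := by
        refine (Finset.sum_bij (fun (σ : Equiv.Perm (Fin k)) _ => (σ : Fin k → Fin k))
          ?_ ?_ ?_ ?_).symm
        · intro σ _
          simp only [mem_filter, mem_univ, true_and]
          refine Finset.eq_univ_of_forall fun j => ?_
          simp only [Finset.mem_image, mem_univ, true_and]
          exact ⟨σ.symm j, by simp⟩
        · intro σ1 _ σ2 _ h
          exact Equiv.coe_fn_injective h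
        · intro r hr
          simp only [mem_filter, mem_univ, true_and] at hr
          have hsurj : Function.Surjective r := by
            intro j
            have : j ∈ univ.image r := by rw [hr]; exact mem_univ j
            simpa [Finset.mem_image] using this
          have hbij : Function.Bijective r := Finite.surjective_iff_bijective.mp hsurj
          exact ⟨Equiv.ofBijective r hbij, mem_univ _, rfl⟩
        · intro σ _
          rfl
    _ = (k.factorial : ℝ) * B v := by
        have : ∀ σ : Equiv.Perm (Fin k), B (fun i => v (σ i)) = B v := fun σ => hB σ v
        rw [Finset.sum_congr rfl fun σ _ => this σ, Finset.sum_const, card_univ,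
          Fintype.card_perm, Fintype.card_fin, nsmul_eq_mul]

theorem diag_bound {k : ℕ} (B : ContinuousMultilinearMap ℝ (fun _ : Fin k => E) ℝ)
    (A : ℝ) (hA : 0 ≤ A) (hex : ∃ e : E, ‖e‖ = 1)
    (h : ∀ v : E, ‖v‖ = 1 → |B (fun _ => v)| ≤ A) (w : E) :
    |B (fun _ => w)| ≤ ‖w‖ ^ k * A := by
  rcases eq_or_ne w 0 with rfl | hw
  · rcases Nat.eq_zero_or_pos k with rfl | hk
    · obtain ⟨e, he⟩ := hex
      have : (fun _ : Fin 0 => (0:E)) = (fun _ : Fin 0 => e) := funext fun i => i.elim0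
      rw [this]
      simpa using h e he
    · have : B (fun _ : Fin k => (0:E)) = 0 :=
        B.map_coord_zero (i := ⟨0, hk⟩) rfl
      rw [this, abs_zero]
      positivity
  · set v := ‖w‖⁻¹ • w with hv
    have hnw : (0:ℝ) < ‖w‖ := norm_pos_iff.mpr hw
    have hvn : ‖v‖ = 1 := by
      rw [hv, norm_smul]
      simp [abs_of_pos (inv_pos.mpr hnw), inv_mul_cancel₀ hnw.ne']
    have hwv : w = ‖w‖ • v := by
      rw [hv, smul_smul, mul_inv_cancel₀ hnw.ne', one_smul]
    have : B (fun _ => w) = (∏ _i : Fin k, ‖w‖) • B (fun _ => v) := by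
      conv_lhs => rw [hwv]
      exact B.toMultilinearMap.map_smul_univ (fun _ => ‖w‖) (fun _ => v)
    rw [this]
    rw [smul_eq_mul, abs_mul, Finset.prod_const, card_univ, Fintype.card_fin,
      abs_pow, abs_of_pos hnw]
    exact mul_le_mul_of_nonneg_left (h v hvn) (by positivity)

theorem pow_self_le_exp_factorial (k : ℕ) :
    (k:ℝ)^k ≤ (Real.exp 1)^k * (k.factorial : ℝ) := by
  induction k with
  | zero => simp
  | succ k ih =>
    have hstep : ((k+1:ℕ):ℝ)^k ≤ (Real.exp 1)^(k+1) * (k.factorial : ℝ) := by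
      rcases Nat.eq_zero_or_pos k with rfl | hk
      · simpa using (Real.one_le_exp (le_refl 1)).trans (le_mul_of_one_le_left (Real.exp_pos 1).le (Real.one_le_exp zero_le_one))
      · have hk0 : (0:ℝ) < (k:ℝ) := by exact_mod_cast hk
        have h1 : ((k+1:ℕ):ℝ) = (k:ℝ) * (1 + 1/(k:ℝ)) := by
          field_simp
          norm_num
        have h2 : (1 + 1/(k:ℝ))^k ≤ Real.exp 1 := by
          have := Real.add_one_le_exp (1/(k:ℝ))
          calc (1 + 1/(k:ℝ))^k ≤ (Real.exp (1/(k:ℝ)))^k := by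
                refine pow_le_pow_left₀ (by positivity) ?_ k
                linarith [this]
            _ = Real.exp 1 := by
                rw [← Real.exp_nat_mul]
                congr 1
                field_simp
        calc ((k+1:ℕ):ℝ)^k = (k:ℝ)^k * (1 + 1/(k:ℝ))^k := by
              rw [h1, mul_pow]
          _ ≤ ((Real.exp 1)^k * (k.factorial : ℝ)) * Real.exp 1 := by
              refine mul_le_mul ih h2 (by positivity) (by positivity)
          _ = (Real.exp 1)^(k+1) * (k.factorial : ℝ) := by ring
    calc ((k+1:ℕ):ℝ)^(k+1) = ((k+1:ℕ):ℝ) * ((k+1:ℕ):ℝ)^k := by ring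
      _ ≤ ((k+1:ℕ):ℝ) * ((Real.exp 1)^(k+1) * (k.factorial : ℝ)) := by
          refine mul_le_mul_of_nonneg_left hstep (by positivity)
      _ = (Real.exp 1)^(k+1) * (((k+1) * k.factorial : ℕ) : ℝ) := by
          push_cast; ring
      _ = (Real.exp 1)^(k+1) * ((k+1).factorial : ℝ) := by
          rw [Nat.factorial_succ]

theorem coord_le_norm {d : ℕ} (v : EuclideanSpace ℝ (Fin d)) (i : Fin d) :
    |v i| ≤ ‖v‖ := by
  have := EuclideanSpace.norm_eq v
  rw [this]
  have h1 : |v i| = Real.sqrt (‖v i‖^2) := by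
    rw [Real.sqrt_sq_eq_abs]; simp [abs_abs]
  rw [h1]
  refine Real.sqrt_le_sqrt ?_
  exact Finset.single_le_sum (f := fun j => ‖v j‖^2) (fun j _ => by positivity) (mem_univ i)

theorem eucl_decomp {d : ℕ} (v : EuclideanSpace ℝ (Fin d)) :
    v = ∑ i : Fin d, v i • EuclideanSpace.single i (1:ℝ) := by
  ext j
  have : (∑ i : Fin d, v i • EuclideanSpace.single i (1:ℝ)) j
      = ∑ i : Fin d, (v i • EuclideanSpace.single i (1:ℝ)) j := by
    simp [Pi.single_apply]
  rw [this]
  simp [EuclideanSpace.single_apply]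
theorem stmt12 {d : ℕ} (f : EuclideanSpace ℝ (Fin d) → ℝ) (hf : ContDiff ℝ (⊤ : ℕ∞) f)
    (K : Set (EuclideanSpace ℝ (Fin d))) (hK : IsCompact K)
    (M : ℕ → ℝ) (hM : ∀ k, 0 < M k) :
    (∃ C ρ : ℝ, 0 < C ∧ 0 < ρ ∧ ∀ k : ℕ, ∀ x ∈ K, ∀ v : EuclideanSpace ℝ (Fin d),
        ‖v‖ = 1 →
        |iteratedDeriv k (fun s : ℝ => f (x + s • v)) 0| ≤
          C * ρ ^ k * (k.factorial : ℝ) * M k) ↔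
    (∃ C ρ : ℝ, 0 < C ∧ 0 < ρ ∧ ∀ k : ℕ, ∀ x ∈ K, ∀ m : Fin k → Fin d,
        |iteratedFDeriv ℝ k f x (fun j => EuclideanSpace.single (m j) (1:ℝ))| ≤
          C * ρ ^ k * (k.factorial : ℝ) * M k) := by
  have hsm : ContDiff ℝ (⊤:ℕ∞) f := hf.of_le (by simp)
  constructor
  · rintro ⟨C, ρ, hC, hρ, hb⟩
    rcases Nat.eq_zero_or_pos d with rfl | hd
    · -- degenerate case d = 0
      refine ⟨(|f 0| + 1) / M 0, 1, by have := hM 0; positivity, one_pos, ?_⟩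
      intro k x hx m
      rcases Nat.eq_zero_or_pos k with rfl | hk
      · have hx0 : x = 0 := Subsingleton.elim _ _
        rw [iteratedFDeriv_zero_apply, hx0]
        have hM0 : (0:ℝ) < M 0 := hM 0
        have : (|f 0| + 1) / M 0 * 1 ^ (0:ℕ) * ((Nat.factorial 0 : ℕ) : ℝ) * M 0
            = |f 0| + 1 := by
          field_simp
          simp
        rw [this]
        linarith [abs_nonneg (f 0)]
      · exact (m ⟨0, hk⟩).elim0
    · -- main case d ≥ 1
      refine ⟨C, 2 * Real.exp 1 * ρ, hC, by positivity, ?_⟩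
      intro k x hx m
      set B := iteratedFDeriv ℝ k f x with hBdef
      set vs : Fin k → EuclideanSpace ℝ (Fin d) :=
        fun j => EuclideanSpace.single (m j) (1:ℝ) with hvs
      have hBsymm : ∀ (σ : Equiv.Perm (Fin k)) (w : Fin k → EuclideanSpace ℝ (Fin d)),
          B (w ∘ σ) = B w := fun σ w => iteratedFDeriv_perm_invariant k hsm x w σ
      set A : ℝ := C * ρ ^ k * (k.factorial : ℝ) * M k with hAdef
      have hApos : 0 ≤ A := by
        have := (hM k).le
        positivity
      have hA : ∀ v : EuclideanSpace ℝ (Fin d), ‖v‖ = 1 → |B (fun _ => v)| ≤ A := by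
        intro v hv
        rw [← iteratedDeriv_line_eq_iteratedFDeriv hsm k x v]
        exact hb k x hx v hv
      have hex : ∃ e : EuclideanSpace ℝ (Fin d), ‖e‖ = 1 :=
        ⟨EuclideanSpace.single ⟨0, hd⟩ (1:ℝ), by rw [EuclideanSpace.norm_single]; norm_num⟩
      have hdiag := diag_bound B A hApos hex hA
      have hpolar := polar B hBsymm vs
      have hterm : ∀ S : Finset (Fin k),
          |((-1:ℝ)^k * (-1)^S.card) * B (fun _ => ∑ j ∈ S, vs j)| ≤ (k:ℝ)^k * A := by
        intro S
        rw [abs_mul]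
        have h1 : |(-1:ℝ)^k * (-1)^S.card| = 1 := by
          rw [abs_mul, abs_pow, abs_pow, abs_neg, abs_one, one_pow, one_pow, one_mul]
        rw [h1, one_mul]
        have h2 : ‖∑ j ∈ S, vs j‖ ≤ (k:ℝ) := by
          calc ‖∑ j ∈ S, vs j‖ ≤ ∑ j ∈ S, ‖vs j‖ := norm_sum_le S vs
            _ = S.card := by
                simp [hvs, EuclideanSpace.norm_single]
            _ ≤ (k:ℝ) := by
                exact_mod_cast (Finset.card_le_card (Finset.subset_univ S)).trans_eq (by simp)
        calc |B (fun _ => ∑ j ∈ S, vs j)| ≤ ‖∑ j ∈ S, vs j‖ ^ k * A := hdiag _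
          _ ≤ (k:ℝ)^k * A :=
              mul_le_mul_of_nonneg_right (pow_le_pow_left₀ (norm_nonneg _) h2 k) hApos
      have hsum : |(k.factorial : ℝ) * B vs| ≤ 2^k * ((k:ℝ)^k * A) := by
        rw [hpolar]
        calc |∑ S : Finset (Fin k), ((-1:ℝ)^k * (-1)^S.card) * B (fun _ => ∑ j ∈ S, vs j)|
            ≤ ∑ S : Finset (Fin k), |((-1:ℝ)^k * (-1)^S.card) * B (fun _ => ∑ j ∈ S, vs j)| :=
              Finset.abs_sum_le_sum_abs _ _
          _ ≤ ∑ _S : Finset (Fin k), (k:ℝ)^k * A := Finset.sum_le_sum fun S _ => hterm S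
          _ = 2^k * ((k:ℝ)^k * A) := by
              rw [Finset.sum_const, Finset.card_univ, Fintype.card_finset, Fintype.card_fin,
                nsmul_eq_mul]
              push_cast
              ring
      have hfacpos : (0:ℝ) < (k.factorial : ℝ) := by exact_mod_cast k.factorial_pos
      rw [show |iteratedFDeriv ℝ k f x fun j => EuclideanSpace.single (m j) (1:ℝ)| = |B vs| from rfl]
      refine le_of_mul_le_mul_left ?_ hfacpos
      calc (k.factorial : ℝ) * |B vs| = |(k.factorial : ℝ) * B vs| := by
            rw [abs_mul, abs_of_pos hfacpos]
        _ ≤ 2^k * ((k:ℝ)^k * A) := hsum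
        _ ≤ 2^k * (((Real.exp 1)^k * (k.factorial : ℝ)) * A) := by
            have hk := pow_self_le_exp_factorial k
            exact mul_le_mul_of_nonneg_left (mul_le_mul_of_nonneg_right hk hApos) (by positivity)
        _ = (k.factorial : ℝ) * (C * (2 * Real.exp 1 * ρ) ^ k * (k.factorial : ℝ) * M k) := by
            rw [hAdef, mul_pow, mul_pow]
            ring
  · rintro ⟨C, ρ, hC, hρ, hb⟩
    refine ⟨C, (d + 1) * ρ, hC, by positivity, ?_⟩
    intro k x hx v hv
    rw [iteratedDeriv_line_eq_iteratedFDeriv hsm k x v]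
    set B := iteratedFDeriv ℝ k f x with hBdef
    have expand : B (fun _ => v) = ∑ r : Fin k → Fin d,
        (∏ i : Fin k, v (r i)) • B (fun i => EuclideanSpace.single (r i) (1:ℝ)) := by
      conv_lhs => rw [show v = ∑ i : Fin d, v i • EuclideanSpace.single i (1:ℝ) from eucl_decomp v]
      rw [show (B (fun _ => ∑ i : Fin d, v i • EuclideanSpace.single i (1:ℝ)))
          = ∑ r : Fin k → Fin d, B (fun i => v (r i) • EuclideanSpace.single (r i) (1:ℝ)) from
        B.toMultilinearMap.map_sum (fun _ j => v j • EuclideanSpace.single j (1:ℝ))]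
      refine Finset.sum_congr rfl fun r _ => ?_
      exact B.toMultilinearMap.map_smul_univ (fun i => v (r i))
        (fun i => EuclideanSpace.single (r i) (1:ℝ))
    rw [expand]
    have hcoord : ∀ j : Fin d, |v j| ≤ 1 := by
      intro j
      calc |v j| ≤ ‖v‖ := coord_le_norm v j
        _ = 1 := hv
    have hterm : ∀ r : Fin k → Fin d,
        |(∏ i : Fin k, v (r i)) • B (fun i => EuclideanSpace.single (r i) (1:ℝ))|
          ≤ C * ρ ^ k * (k.factorial : ℝ) * M k := by
      intro r
      rw [smul_eq_mul, abs_mul]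
      have h1 : |∏ i : Fin k, v (r i)| ≤ 1 := by
        rw [abs_prod]
        exact Finset.prod_le_one (fun i _ => abs_nonneg _) (fun i _ => hcoord (r i))
      have h2 := hb k x hx r
      calc |∏ i : Fin k, v (r i)| * |B (fun i => EuclideanSpace.single (r i) (1:ℝ))|
          ≤ 1 * (C * ρ ^ k * (k.factorial : ℝ) * M k) := by
            refine mul_le_mul h1 h2 (abs_nonneg _) zero_le_one
        _ = C * ρ ^ k * (k.factorial : ℝ) * M k := one_mul _
    calc |∑ r : Fin k → Fin d,
          (∏ i : Fin k, v (r i)) • B (fun i => EuclideanSpace.single (r i) (1:ℝ))|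
        ≤ ∑ r : Fin k → Fin d,
          |(∏ i : Fin k, v (r i)) • B (fun i => EuclideanSpace.single (r i) (1:ℝ))| :=
          Finset.abs_sum_le_sum_abs _ _
      _ ≤ ∑ _r : Fin k → Fin d, C * ρ ^ k * (k.factorial : ℝ) * M k :=
          Finset.sum_le_sum fun r _ => hterm r
      _ = (d:ℝ)^k * (C * ρ ^ k * (k.factorial : ℝ) * M k) := by
          rw [Finset.sum_const, Finset.card_univ, nsmul_eq_mul]
          congr 1
          rw [Fintype.card_fun, Fintype.card_fin, Fintype.card_fin]
          push_cast
          ring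
      _ ≤ C * ((d + 1) * ρ) ^ k * (k.factorial : ℝ) * M k := by
          have hd1 : (d:ℝ)^k ≤ ((d:ℝ)+1)^k := by
            refine pow_le_pow_left₀ (by positivity) (by linarith) k
          have := (hM k).le
          calc (d:ℝ)^k * (C * ρ ^ k * (k.factorial : ℝ) * M k)
              ≤ ((d:ℝ)+1)^k * (C * ρ ^ k * (k.factorial : ℝ) * M k) := by
                refine mul_le_mul_of_nonneg_right hd1 (by positivity)
            _ = C * ((d + 1) * ρ) ^ k * (k.factorial : ℝ) * M k := by
                rw [mul_pow]
                push_cast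
                ring
end

section
/- Let $\Gamma = \Gamma_d^\alpha(r,h) = \{(x', x_d) \in \mathbb{R}^{d-1} \times \mathbb{R} : |x'| < r, \; h(|x'|/r)^\alpha < x_d < h\}$ be a truncated open cusp with $0 < \alpha \le 1$ and $r, h > 0$. Let $p < q$ be positive integers with $p/q \le \alpha$. Then for any $x \in \mathbb{R}^d$ and $v = (v', v_d) \in \Gamma$, the curve $c(t) := x + (t^{2q} v', t^{2p} v_d)$ satisfies $c(t) - x \in \Gamma$ for all $0 < |t| < 1$. -/
theorem stmt13 {m : ℕ} (α r h : ℝ) (hα0 : 0 < α) (hα1 : α ≤ 1) (hr : 0 < r) (hh : 0 < h)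
    (p q : ℕ) (hp : 0 < p) (hpq : p < q) (hpqα : (p : ℝ) / (q : ℝ) ≤ α)
    (Γ : Set (EuclideanSpace ℝ (Fin m) × ℝ))
    (hΓ : Γ = {w | ‖w.1‖ < r ∧ h * (‖w.1‖ / r) ^ α < w.2 ∧ w.2 < h})
    (v : EuclideanSpace ℝ (Fin m) × ℝ) (hv : v ∈ Γ)
    (x : EuclideanSpace ℝ (Fin m) × ℝ)
    (c : ℝ → EuclideanSpace ℝ (Fin m) × ℝ)
    (hc : ∀ t, c t = x + (t ^ (2*q) • v.1, t ^ (2*p) * v.2))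
    (t : ℝ) (ht0 : 0 < |t|) (ht1 : |t| < 1) :
    c t - x ∈ Γ := by
  subst hΓ
  obtain ⟨hv1, hv2, hv3⟩ := hv
  have hq : 0 < q := hpq.trans_le' hp.le
  have hv2pos : 0 < v.2 := lt_of_le_of_lt (by positivity) hv2
  have hc' : c t - x = (t ^ (2*q) • v.1, t ^ (2*p) * v.2) := by
    rw [hc]; abel
  rw [hc']
  set a := |t| with ha
  have ha1 : a ≤ 1 := ht1.le
  -- norm computation
  have hnorm : ‖t ^ (2*q) • v.1‖ = a ^ (2*q) * ‖v.1‖ := by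
    rw [norm_smul, Real.norm_eq_abs, abs_pow]
  have hap : (0:ℝ) < a ^ (2*q) := pow_pos ht0 _
  have h1 : ‖t ^ (2*q) • v.1‖ < r := by
    rw [hnorm]
    calc a ^ (2*q) * ‖v.1‖ ≤ 1 * ‖v.1‖ := by
          apply mul_le_mul_of_nonneg_right _ (norm_nonneg _)
          exact pow_le_one₀ (abs_nonneg t) ha1
      _ = ‖v.1‖ := one_mul _
      _ < r := hv1
  refine ⟨h1, ?_, ?_⟩
  · -- lower bound
    have htp : t ^ (2*p) = a ^ (2*p) := by
      rw [ha, ← abs_pow, abs_of_nonneg]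
      exact (even_two_mul p).pow_nonneg t
    have hexp : (2*p : ℝ) ≤ (2*q : ℝ) * α := by
      have : (p:ℝ) ≤ (q:ℝ) * α := by
        rw [div_le_iff₀ (by exact_mod_cast hq)] at hpqα
        linarith [hpqα]
      push_cast
      nlinarith
    have key : h * ((a ^ (2*q) * ‖v.1‖) / r) ^ α
        = a ^ ((2*q : ℝ) * α) * (h * (‖v.1‖ / r) ^ α) := by
      rw [mul_div_assoc, Real.mul_rpow (by positivity) (by positivity),
        ← Real.rpow_natCast a (2*q), ← Real.rpow_mul (abs_nonneg t)]
      push_cast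
      ring
    rw [hnorm, key, htp]
    calc a ^ ((2*q : ℝ) * α) * (h * (‖v.1‖ / r) ^ α)
        < a ^ ((2*q : ℝ) * α) * v.2 := by
          exact mul_lt_mul_of_pos_left hv2 (Real.rpow_pos_of_pos ht0 _)
      _ ≤ a ^ ((2*p : ℝ)) * v.2 := by
          apply mul_le_mul_of_nonneg_right _ hv2pos.le
          exact Real.rpow_le_rpow_of_exponent_ge ht0 ha1 hexp
      _ = a ^ (2*p) * v.2 := by
          rw [← Real.rpow_natCast a (2*p)]; push_cast; ring_nf
  · have htp : t ^ (2*p) ≤ 1 := by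
      rw [← abs_pow] at *
      calc t ^ (2*p) ≤ |t ^ (2*p)| := le_abs_self _
        _ ≤ 1 := by rw [abs_pow]; exact pow_le_one₀ (abs_nonneg t) ha1
    calc t ^ (2*p) * v.2 ≤ 1 * v.2 := mul_le_mul_of_nonneg_right htp hv2pos.le
      _ = v.2 := one_mul _
      _ < h := hv3
end

section
/- Let $X = \{(x,y) \in \mathbb{R}^2 : x \ge 0, \; 0 \le y \le x\} \cup \{(x,y) \in \mathbb{R}^2 : 0 \le x \le y/2\}$. Then every smooth curve $c : \mathbb{R} \to \mathbb{R}^2$ with image in $X$ and with $c(t_0) = (0,0)$ for some $t_0$, such that $c(t)$ lies in $\{x \ge 0, 0 \le y \le x\}$ for $t \le t_0$ and in $\{0 \le x \le y/2\}$ for $t \ge t_0$, vanishes to infinite order at $t_0$: all derivatives $c^{(k)}(t_0) = 0$ for $k \ge 1$. -/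
open Set

/-- For a globally smooth function, iterated derivatives within a set of unique
differentiability agree with global iterated derivatives. -/
lemma my_iDW_eq {f : ℝ → ℝ} (hf : ContDiff ℝ (⊤ : ℕ∞) f) {s : Set ℝ} (hs : UniqueDiffOn ℝ s)
    {x : ℝ} (hx : x ∈ s) (n : ℕ) :
    iteratedDerivWithin n f s x = iteratedDeriv n f x := by
  have h := (contDiff_iff_ftaylorSeries.mp (hf.of_le (by exact_mod_cast le_top) :
      ContDiff ℝ (n : ℕ∞) f)).hasFTaylorSeriesUpToOn s
  have := h.eq_iteratedFDerivWithin_of_uniqueDiffOn le_rfl hs hx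
  rw [iteratedDerivWithin_eq_iteratedFDerivWithin, iteratedDeriv_eq_iteratedFDeriv, ← this]
  rfl

/-- Key one-sided lemma: if all derivatives of order `< p` vanish at `t0` and `f ≥ 0`
to the right of `t0`, then the `p`-th derivative at `t0` is nonnegative. -/
lemma my_key {f : ℝ → ℝ} (hf : ContDiff ℝ (⊤ : ℕ∞) f) {t0 : ℝ} {p : ℕ} (hp : 1 ≤ p)
    (hprev : ∀ j, j < p → iteratedDeriv j f t0 = 0)
    (hpos : ∀ t, t0 ≤ t → 0 ≤ f t) : 0 ≤ iteratedDeriv p f t0 := by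
  obtain ⟨n, rfl⟩ : ∃ n, p = n + 1 := ⟨p - 1, (Nat.succ_pred_eq_of_pos hp).symm⟩
  by_contra hneg
  push_neg at hneg
  have hcont : Continuous (iteratedDeriv (n + 1) f) :=
    hf.continuous_iteratedDeriv (n + 1) (by exact_mod_cast le_top)
  obtain ⟨ε, hε, hball⟩ : ∃ ε > 0, ∀ y ∈ Metric.ball t0 ε, iteratedDeriv (n + 1) f y < 0 := by
    have : {y | iteratedDeriv (n + 1) f y < 0} ∈ nhds t0 :=
      (hcont.continuousAt (x := t0)).preimage_mem_nhds (Iio_mem_nhds hneg)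
    obtain ⟨ε, hε, hsub⟩ := Metric.mem_nhds_iff.mp this
    exact ⟨ε, hε, fun y hy => hsub hy⟩
  set x := t0 + ε / 2 with hxdef
  have hx : t0 < x := by simp only [hxdef]; linarith
  have hsub : Icc t0 x ⊆ Metric.ball t0 ε := by
    intro y hy
    have h1 := hy.1
    have h2 := hy.2
    simp only [hxdef] at h2
    simp only [Metric.mem_ball, Real.dist_eq, abs_sub_lt_iff]
    constructor <;> linarith
  have hud : UniqueDiffOn ℝ (Icc t0 x) := uniqueDiffOn_Icc hx
  have hdiff : Differentiable ℝ (iteratedDeriv n f) :=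
    ContDiff.differentiable_iteratedDeriv' n (hf.of_le (by exact_mod_cast le_top))
  have hfd : DifferentiableOn ℝ (iteratedDerivWithin n f (Icc t0 x)) (Ioo t0 x) := by
    apply DifferentiableOn.congr hdiff.differentiableOn
    intro y hy
    exact my_iDW_eq hf hud (Ioo_subset_Icc_self hy) n
  have hT := taylor_mean_remainder_lagrange (f := f) (n := n) hx.ne
  rw [uIcc_of_le hx.le, uIoo_of_le hx.le] at hT
  obtain ⟨ξ, hξ, heq⟩ := hT
    ((hf.of_le (by exact_mod_cast le_top)).contDiffOn) hfd
  have htay : taylorWithinEval f n (Icc t0 x) t0 x = 0 := by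
    rw [taylor_within_apply]
    apply Finset.sum_eq_zero
    intro k hk
    rw [my_iDW_eq hf hud (left_mem_Icc.mpr hx.le) k,
      hprev k (Nat.lt_succ_of_le (Nat.lt_succ_iff.mp (Finset.mem_range.mp hk)))]
    simp
  rw [htay, sub_zero] at heq
  have hξval : iteratedDerivWithin (n + 1) f (Icc t0 x) ξ < 0 := by
    rw [my_iDW_eq hf hud (Ioo_subset_Icc_self hξ) (n + 1)]
    exact hball ξ (hsub (Ioo_subset_Icc_self hξ))
  have hfx : f x < 0 := by
    rw [heq]
    apply div_neg_of_neg_of_pos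
    · exact mul_neg_of_neg_of_pos hξval (pow_pos (by linarith) _)
    · exact_mod_cast Nat.factorial_pos (n + 1)
  exact absurd (hpos x hx.le) (not_le.mpr hfx)

/-- Mirror version: `f ≥ 0` to the left of `t0`. -/
lemma my_key_left {f : ℝ → ℝ} (hf : ContDiff ℝ (⊤ : ℕ∞) f) {t0 : ℝ} {p : ℕ} (hp : 1 ≤ p)
    (hprev : ∀ j, j < p → iteratedDeriv j f t0 = 0)
    (hpos : ∀ t, t ≤ t0 → 0 ≤ f t) :
    0 ≤ (-1 : ℝ) ^ p * iteratedDeriv p f t0 := by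
  set g : ℝ → ℝ := fun t => f (2 * t0 - t) with hg
  have hgsmooth : ContDiff ℝ (⊤ : ℕ∞) g :=
    hf.comp (contDiff_const.sub contDiff_id)
  have hgderiv : ∀ k : ℕ, ∀ a : ℝ, iteratedDeriv k g a
      = (-1 : ℝ) ^ k * iteratedDeriv k f (2 * t0 - a) := by
    intro k a
    have h1 : g = fun t => (fun z => f (2 * t0 + z)) (-t) := by
      funext t; simp [hg, sub_eq_add_neg]
    rw [h1, iteratedDeriv_comp_neg k (fun z => f (2 * t0 + z)) a,
      iteratedDeriv_comp_const_add k f (2 * t0)]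
    simp [smul_eq_mul, sub_eq_add_neg]
  have e0 : 2 * t0 - t0 = t0 := by ring
  have hkey := my_key hgsmooth hp (fun j hj => by
      rw [hgderiv j t0, e0, hprev j hj, mul_zero])
    (fun t ht => hpos (2 * t0 - t) (by linarith))
  rw [hgderiv p t0, e0] at hkey
  exact hkey

/-- Iterated derivative commutes with postcomposition by a continuous linear map. -/
lemma my_comp_clm (L : ℝ × ℝ →L[ℝ] ℝ) {c : ℝ → ℝ × ℝ} (hc : ContDiff ℝ (⊤ : ℕ∞) c)
    (k : ℕ) (t : ℝ) :
    iteratedDeriv k (fun s => L (c s)) t = L (iteratedDeriv k c t) := by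
  rw [iteratedDeriv_eq_iteratedFDeriv, iteratedDeriv_eq_iteratedFDeriv]
  rw [show (fun s => L (c s)) = L ∘ c from rfl,
    L.iteratedFDeriv_comp_left hc.contDiffAt ((by exact_mod_cast le_top))]
  rfl

theorem stmt17 (c : ℝ → ℝ × ℝ) (hc : ContDiff ℝ (⊤ : ℕ∞) c) (t0 : ℝ)
    (h1 : ∀ t ≤ t0, 0 ≤ (c t).1 ∧ 0 ≤ (c t).2 ∧ (c t).2 ≤ (c t).1)
    (h2 : ∀ t ≥ t0, 0 ≤ (c t).1 ∧ (c t).1 ≤ (c t).2 / 2)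
    (h0 : c t0 = (0, 0)) :
    ∀ k : ℕ, 1 ≤ k → iteratedDeriv k c t0 = 0 := by
  have main : ∀ k : ℕ, iteratedDeriv k c t0 = 0 := by
    intro k
    induction k using Nat.strong_induction_on with
    | _ p ih =>
      rcases Nat.eq_zero_or_pos p with hp | hp
      · subst hp; simp [iteratedDeriv_zero, h0, Prod.ext_iff]
      have hprev : ∀ (L : ℝ × ℝ →L[ℝ] ℝ) j, j < p →
          iteratedDeriv j (fun s => L (c s)) t0 = 0 := by
        intro L j hj
        rw [my_comp_clm L hc j t0, ih j hj]
        exact L.map_zero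
      have hsm : ∀ L : ℝ × ℝ →L[ℝ] ℝ, ContDiff ℝ (⊤ : ℕ∞) (fun s => L (c s)) :=
        fun L => L.contDiff.comp hc
      set A := (iteratedDeriv p c t0).1 with hA
      set B := (iteratedDeriv p c t0).2 with hB
      have e2 : ∀ v : ℝ × ℝ,
          ((1/2 : ℝ) • ContinuousLinearMap.snd ℝ ℝ ℝ - ContinuousLinearMap.fst ℝ ℝ ℝ) v
            = 1/2 * v.2 - v.1 := fun v => by simp
      have e4 : ∀ v : ℝ × ℝ,
          (ContinuousLinearMap.fst ℝ ℝ ℝ - ContinuousLinearMap.snd ℝ ℝ ℝ) v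
            = v.1 - v.2 := fun v => by simp
      -- right side: x ≥ 0
      have r1 : 0 ≤ A := by
        have := my_key (hsm _) hp (hprev (ContinuousLinearMap.fst ℝ ℝ ℝ))
          (fun t ht => (h2 t ht).1)
        rwa [my_comp_clm _ hc p t0] at this
      -- right side: y/2 - x ≥ 0
      have r2 : 0 ≤ 1/2 * B - A := by
        have := my_key (hsm ((1/2 : ℝ) • ContinuousLinearMap.snd ℝ ℝ ℝ
            - ContinuousLinearMap.fst ℝ ℝ ℝ)) hp (hprev _)
          (fun t ht => by rw [e2]; have := (h2 t ht).2; linarith)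
        rwa [my_comp_clm _ hc p t0, e2] at this
      -- left side: y ≥ 0
      have l1 : 0 ≤ (-1 : ℝ) ^ p * B := by
        have := my_key_left (hsm _) hp (hprev (ContinuousLinearMap.snd ℝ ℝ ℝ))
          (fun t ht => (h1 t ht).2.1)
        rwa [my_comp_clm _ hc p t0] at this
      -- left side: x - y ≥ 0
      have l2 : 0 ≤ (-1 : ℝ) ^ p * (A - B) := by
        have := my_key_left (hsm (ContinuousLinearMap.fst ℝ ℝ ℝ
            - ContinuousLinearMap.snd ℝ ℝ ℝ)) hp (hprev _)
          (fun t ht => by rw [e4]; have := (h1 t ht).2.2; linarith)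
        rwa [my_comp_clm _ hc p t0, e4] at this
      have hAB : A = 0 ∧ B = 0 := by
        rcases Nat.even_or_odd p with he | ho
        · rw [he.neg_one_pow] at l1 l2
          constructor <;> linarith
        · rw [ho.neg_one_pow] at l1 l2
          constructor <;> linarith
      have hrw : iteratedDeriv p c t0 = (A, B) := rfl
      rw [hrw, hAB.1, hAB.2]
      rfl
  exact fun k _ => main k
end
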